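/- arXiv:1201.0948 — 5 statements merged into one kernel-verified Lean document; each statement's English description precedes it below -/
import Mathlib

section
/- Let K be a field and let (A, e_A) and (B, e_B) be commutative associative unital K-algebras. Let Θ : A × B → A be a K-bilinear map with Θ(x, e_B) = x for all x ∈ A. Define a bilinear multiplication ∘ on the direct sum A ⊕ B by (x,v) ∘ (y,w) = (x·y + Θ(y,v) + Θ(x,w), v·w), and set α : B → A, α(v) := Θ(e_A, v). Then ∘ is always commutative with unit element (0, e_B), and ∘ is associative if and only if Θ(x,v) = x·α(v) for all x ∈ A, v ∈ B and α(v·w) = α(v)·α(w) for all v, w ∈ B; moreover in that case α(e_B) = e_A. -/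
/-- The multiplication on `A ⊕ B` induced by a bilinear map `Θ : A × B → A`:
`(x,v) ∘ (y,w) = (x·y + Θ(y,v) + Θ(x,w), v·w)`. -/
def prodMulTheta {K A B : Type*} [Field K] [CommRing A] [CommRing B]
    [Algebra K A] [Algebra K B] (Θ : A →ₗ[K] B →ₗ[K] A) :
    A × B → A × B → A × B :=
  fun p q => (p.1 * q.1 + Θ q.1 p.2 + Θ p.1 q.2, p.2 * q.2)

/-- for commutative associative unital `K`-algebras `A`, `B` and a
bilinear `Θ : A × B → A` with `Θ(x, e_B) = x`, the product
`(x,v) ∘ (y,w) = (x·y + Θ(y,v) + Θ(x,w), v·w)` on `A ⊕ B` is always commutative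
with unit `(0, e_B)`, and it is associative iff `Θ(x,v) = x·α(v)` and
`α(v·w) = α(v)·α(w)`, where `α(v) = Θ(e_A, v)`; moreover in that case `α(e_B) = e_A`. -/
theorem stmt0 {K A B : Type*} [Field K] [CommRing A] [CommRing B]
    [Algebra K A] [Algebra K B]
    (Θ : A →ₗ[K] B →ₗ[K] A) (hΘ : ∀ x : A, Θ x (1 : B) = x) :
    (∀ p q : A × B, prodMulTheta Θ p q = prodMulTheta Θ q p) ∧
    (∀ p : A × B, prodMulTheta Θ p (0, 1) = p) ∧
    ((∀ p q r : A × B, prodMulTheta Θ (prodMulTheta Θ p q) r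
        = prodMulTheta Θ p (prodMulTheta Θ q r)) ↔
      ((∀ (x : A) (v : B), Θ x v = x * Θ 1 v) ∧
        (∀ v w : B, Θ 1 (v * w) = Θ 1 v * Θ 1 w))) ∧
    (((∀ (x : A) (v : B), Θ x v = x * Θ 1 v) ∧
        (∀ v w : B, Θ 1 (v * w) = Θ 1 v * Θ 1 w)) →
      Θ (1 : A) (1 : B) = (1 : A)) := by
  refine ⟨?_, ?_, ⟨?_, ?_⟩, fun _ => hΘ 1⟩
  · rintro ⟨x, v⟩ ⟨y, w⟩
    simp only [prodMulTheta, Prod.mk.injEq]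
    exact ⟨by ring, mul_comm v w⟩
  · rintro ⟨x, v⟩
    simp [prodMulTheta, hΘ]
  · intro hassoc
    have hh1 : ∀ (x : A) (v : B), Θ x v = x * Θ 1 v := by
      intro x u
      have h := hassoc (x, 1) (1, 1) (0, u)
      simp only [prodMulTheta, Prod.mk.injEq, hΘ, map_add, map_zero, LinearMap.add_apply,
        LinearMap.zero_apply, mul_zero, zero_mul, mul_one, one_mul, zero_add, add_zero] at h
      linear_combination h.1
    refine ⟨hh1, fun v w => ?_⟩
    have h := hassoc (0, v) (0, w) (1, 1)
    simp only [prodMulTheta, Prod.mk.injEq, hΘ, map_add, map_zero, LinearMap.add_apply,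
      LinearMap.zero_apply, mul_zero, zero_mul, mul_one, one_mul, zero_add, add_zero] at h
    rw [h.1, hh1 (Θ 1 w) v, mul_comm]
  · rintro ⟨h1, h2⟩ ⟨x, v⟩ ⟨y, w⟩ ⟨z, u⟩
    obtain ⟨α, hα⟩ : ∃ α : B →ₗ[K] A, α = Θ 1 := ⟨Θ 1, rfl⟩
    have key : ∀ (x : A) (v : B), Θ x v = x * α v := by
      intro a b; rw [hα]; exact h1 a b
    have h2' : ∀ v w : B, α (v * w) = α v * α w := by
      intro a b; rw [hα]; exact h2 a b
    simp only [prodMulTheta, map_add, LinearMap.add_apply, key, h2', Prod.mk.injEq]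
    exact ⟨by ring, mul_assoc v w u⟩
end

section
/- Let K be a field, (A, e_A) and (B, e_B) commutative associative unital K-algebras, and α : B → A a K-linear map with α(v·w) = α(v)·α(w) for all v,w ∈ B. Let g_A be a symmetric bilinear form on A with g_A(x·y, z) = g_A(x, y·z) for all x,y,z ∈ A, and g_B a symmetric bilinear form on B with g_B(u·v, w) = g_B(u, v·w) for all u,v,w ∈ B. Define the multiplication ∘ on A ⊕ B by (x,v) ∘ (y,w) = (x·y + x·α(w) + y·α(v), v·w) and the symmetric bilinear form g on A ⊕ B by g((x,v),(y,w)) = g_A(x,y) + g_A(α(v), y) + g_A(x, α(w)) + g_B(v,w). Then g is invariant with respect to ∘, i.e. g(ξ ∘ η, ζ) = g(ξ, η ∘ ζ) for all ξ, η, ζ ∈ A ⊕ B. -/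
/-- The extended multiplication on `A ⊕ B` induced by an algebra morphism `α : B → A`:
`(x,v) ∘ (y,w) = (x·y + x·α(w) + y·α(v), v·w)`. -/
def extMul {K A B : Type*} [Field K] [CommRing A] [CommRing B]
    [Algebra K A] [Algebra K B] (α : B →ₗ[K] A) : A × B → A × B → A × B :=
  fun p q => (p.1 * q.1 + p.1 * α q.2 + q.1 * α p.2, p.2 * q.2)

/-- The extended bilinear form on `A ⊕ B`:
`g((x,v),(y,w)) = g_A(x,y) + g_A(α v, y) + g_A(x, α w) + g_B(v,w)`. -/
def extForm {K A B : Type*} [Field K] [CommRing A] [CommRing B]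
    [Algebra K A] [Algebra K B]
    (gA : A →ₗ[K] A →ₗ[K] K) (gB : B →ₗ[K] B →ₗ[K] K) (α : B →ₗ[K] A) :
    A × B → A × B → K :=
  fun p q => gA p.1 q.1 + gA (α p.2) q.1 + gA p.1 (α q.2) + gB p.2 q.2

/-- if `g_A` and `g_B` are symmetric invariant bilinear forms on the
commutative associative unital `K`-algebras `A` and `B`, and `α : B → A` is linear and
multiplicative, then the extended form `g` on `A ⊕ B` is invariant with respect to the
extended multiplication `∘`. -/
theorem stmt4 {K A B : Type*} [Field K] [CommRing A] [CommRing B]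
    [Algebra K A] [Algebra K B]
    (α : B →ₗ[K] A) (hαmul : ∀ v w : B, α (v * w) = α v * α w)
    (gA : A →ₗ[K] A →ₗ[K] K) (hgAs : ∀ x y, gA x y = gA y x)
    (hgAinv : ∀ x y z : A, gA (x * y) z = gA x (y * z))
    (gB : B →ₗ[K] B →ₗ[K] K) (hgBs : ∀ v w, gB v w = gB w v)
    (hgBinv : ∀ u v w : B, gB (u * v) w = gB u (v * w)) :
    ∀ ξ η ζ : A × B,
      extForm gA gB α (extMul α ξ η) ζ = extForm gA gB α ξ (extMul α η ζ) := by
  rintro ⟨x, v⟩ ⟨y, w⟩ ⟨z, u⟩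
  have hT12 : ∀ a b c : A, gA a (b * c) = gA b (a * c) := fun a b c => by
    rw [← hgAinv, mul_comm, hgAinv]
  have hT23 : ∀ a b c : A, gA a (b * c) = gA a (c * b) := fun a b c => by
    rw [mul_comm]
  simp only [extForm, extMul, map_add, LinearMap.add_apply, hαmul, hgAinv, hgBinv]
  rw [hT12 y (α v) z, hT12 y (α v) (α u), hT23 x (α w) z]
  ring
end

section
/- Let K be a field, (A, e_A) and (B, e_B) finite-dimensional commutative associative unital K-algebras, g_A a nondegenerate invariant symmetric bilinear form on A, g_B an invariant symmetric bilinear form on B, and α : B → A a unital K-algebra homomorphism (α(v·w) = α(v)·α(w) and α(e_B) = e_A). Assume the bilinear form g_B − α*g_A on B, (v,w) ↦ g_B(v,w) − g_A(α(v), α(w)), is nondegenerate. Define the multiplication ∘ on A ⊕ B by (x,v) ∘ (y,w) = (x·y + x·α(w) + y·α(v), v·w) and the symmetric bilinear form g on A ⊕ B by g((x,v),(y,w)) = g_A(x,y) + g_A(α(v), y) + g_A(x, α(w)) + g_B(v,w). Then (A ⊕ B, ∘, (0, e_B), g) is a commutative Frobenius algebra: ∘ is commutative and associative with unit (0, e_B),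 and g is a nondegenerate symmetric bilinear form invariant with respect to ∘. -/
/-!
The shear `(x, v) ↦ (x + α v, v)` turns `∘` into the componentwise product on `A × B`
(because `α` is multiplicative) and sends `(0, e_B)` to `(1, 1)`, while `g` becomes the
orthogonal sum of `g_A` and `g_B − α*g_A`. Everything then follows from the corresponding
facts for the product algebra `A × B` with an orthogonal sum of invariant nondegenerate forms.
-/

@[simps]
def shear {A B : Type*} [AddGroup A] (f : B → A) : A × B ≃ A × B where
  toFun p := (p.1 + f p.2, p.2)
  invFun p := (p.1 - f p.2, p.2)
  left_inv p := by simp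
  right_inv p := by simp

def prodForm {K A B : Type*} [CommRing K] [AddCommGroup A] [AddCommGroup B]
    [Module K A] [Module K B] (g : A →ₗ[K] A →ₗ[K] K) (h : B →ₗ[K] B →ₗ[K] K)
    (p q : A × B) : K :=
  g p.1 q.1 + h p.2 q.2

section Symmetric

variable {K A B : Type*} [CommRing K] [AddCommGroup A] [AddCommGroup B]
  [Module K A] [Module K B] {g : A →ₗ[K] A →ₗ[K] K} {h : B →ₗ[K] B →ₗ[K] K}

theorem prodForm_comm (hg : ∀ x y, g x y = g y x) (hh : ∀ v w, h v w = h w v)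
    (p q : A × B) : prodForm g h p q = prodForm g h q p := by
  simp only [prodForm, hg p.1, hh p.2]

theorem prodForm_nondegenerate (hg : ∀ x, (∀ y, g x y = 0) → x = 0)
    (hh : ∀ v, (∀ w, h v w = 0) → v = 0) (p : A × B)
    (hp : ∀ q, prodForm g h p q = 0) : p = 0 := by
  have hfst : p.1 = 0 := hg _ fun y => by simpa [prodForm] using hp (y, 0)
  have hsnd : p.2 = 0 := hh _ fun w => by simpa [prodForm] using hp (0, w)
  exact Prod.ext hfst hsnd

theorem sub_compl₁₂_comm {α : B →ₗ[K] A} (hg : ∀ x y, g x y = g y x)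
    (hh : ∀ v w, h v w = h w v) (v w : B) :
    (h - g.compl₁₂ α α) v w = (h - g.compl₁₂ α α) w v := by
  simp only [LinearMap.sub_apply, LinearMap.compl₁₂_apply, hg (α v), hh v]

end Symmetric

section Invariant

variable {K A B : Type*} [CommRing K] [Ring A] [Ring B]
  [Module K A] [Module K B] {g : A →ₗ[K] A →ₗ[K] K} {h : B →ₗ[K] B →ₗ[K] K}

theorem prodForm_mul_left (hg : ∀ x y z : A, g (x * y) z = g x (y * z))
    (hh : ∀ u v w : B, h (u * v) w = h u (v * w)) (p q r : A × B) :
    prodForm g h (p * q) r = prodForm g h p (q * r) := by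
  simp only [prodForm, Prod.fst_mul, Prod.snd_mul, hg, hh]

theorem sub_compl₁₂_mul_left {α : B →ₗ[K] A} (hg : ∀ x y z : A, g (x * y) z = g x (y * z))
    (hh : ∀ u v w : B, h (u * v) w = h u (v * w)) (hα : ∀ v w, α (v * w) = α v * α w)
    (u v w : B) :
    (h - g.compl₁₂ α α) (u * v) w = (h - g.compl₁₂ α α) u (v * w) := by
  simp only [LinearMap.sub_apply, LinearMap.compl₁₂_apply, hα, hg, hh]

end Invariant

section Extension

variable {K A B : Type*} [Field K] [CommRing A] [CommRing B] [Algebra K A] [Algebra K B]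
  {α : B →ₗ[K] A}

theorem shear_extMul (hα : ∀ v w, α (v * w) = α v * α w) (p q : A × B) :
    shear α (extMul α p q) = shear α p * shear α q := by
  ext
  · simp only [extMul, shear_apply, Prod.fst_mul, hα]
    ring
  · rfl

theorem shear_zero_one (hα : α 1 = 1) : shear α ((0, 1) : A × B) = 1 := by
  simp [hα]

theorem extForm_eq_prodForm (gA : A →ₗ[K] A →ₗ[K] K) (gB : B →ₗ[K] B →ₗ[K] K) (p q : A × B) :
    extForm gA gB α p q = prodForm gA (gB - gA.compl₁₂ α α) (shear α p) (shear α q) := by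
  simp only [extForm, prodForm, shear_apply, map_add, LinearMap.add_apply, LinearMap.sub_apply,
    LinearMap.compl₁₂_apply]
  ring

end Extension

theorem stmt5_general {K A B : Type*} [Field K] [CommRing A] [CommRing B]
    [Algebra K A] [Algebra K B]
    (gA : A →ₗ[K] A →ₗ[K] K) (hgAs : ∀ x y, gA x y = gA y x)
    (hgAinv : ∀ x y z : A, gA (x * y) z = gA x (y * z))
    (hgAnd : ∀ x : A, (∀ y : A, gA x y = 0) → x = 0)
    (gB : B →ₗ[K] B →ₗ[K] K) (hgBs : ∀ v w, gB v w = gB w v)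
    (hgBinv : ∀ u v w : B, gB (u * v) w = gB u (v * w))
    (α : B →ₗ[K] A) (hαmul : ∀ v w : B, α (v * w) = α v * α w)
    (hαone : α (1 : B) = (1 : A))
    (hnd : ∀ v : B, (∀ w : B, gB v w - gA (α v) (α w) = 0) → v = 0) :
    (∀ p q : A × B, extMul α p q = extMul α q p) ∧
    (∀ p q r : A × B, extMul α (extMul α p q) r = extMul α p (extMul α q r)) ∧
    (∀ p : A × B, extMul α p (0, 1) = p ∧ extMul α (0, 1) p = p) ∧
    (∀ p q : A × B, extForm gA gB α p q = extForm gA gB α q p) ∧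
    (∀ p : A × B, (∀ q : A × B, extForm gA gB α p q = 0) → p = 0) ∧
    (∀ p q r : A × B,
      extForm gA gB α (extMul α p q) r = extForm gA gB α p (extMul α q r)) := by
  have hmul := shear_extMul hαmul
  have hform := extForm_eq_prodForm (α := α) gA gB
  have hdiff : ∀ v, (∀ w, (gB - gA.compl₁₂ α α) v w = 0) → v = 0 := by simpa using hnd
  refine ⟨fun p q => (shear α).injective ?_, fun p q r => (shear α).injective ?_,
    fun p => ⟨(shear α).injective ?_, (shear α).injective ?_⟩, fun p q => ?_, fun p hp => ?_,
    fun p q r => ?_⟩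
  · rw [hmul, hmul, mul_comm]
  · rw [hmul, hmul, hmul, hmul, mul_assoc]
  · rw [hmul, shear_zero_one hαone, mul_one]
  · rw [hmul, shear_zero_one hαone, one_mul]
  · rw [hform, hform, prodForm_comm hgAs (sub_compl₁₂_comm hgAs hgBs)]
  · have hshear : shear α p = 0 := prodForm_nondegenerate hgAnd hdiff _ fun q => by
      simpa only [hform, Equiv.apply_symm_apply] using hp ((shear α).symm q)
    simpa [Prod.mk_zero_zero] using congrArg (shear α).symm hshear
  · rw [hform, hform, hmul, hmul,
      prodForm_mul_left hgAinv (sub_compl₁₂_mul_left hgAinv hgBinv hαmul)]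

/-- given finite-dimensional commutative associative unital `K`-algebras
`A`, `B`, a nondegenerate invariant symmetric form `g_A`, an invariant symmetric form
`g_B`, a unital algebra homomorphism `α : B → A`, and nondegeneracy of `g_B − α*g_A`,
the extended structure `(A ⊕ B, ∘, (0, e_B), g)` is a commutative Frobenius algebra:
`∘` is commutative, associative, with unit `(0,1)`, and `g` is a nondegenerate symmetric
invariant bilinear form. -/
theorem stmt5 {K A B : Type*} [Field K] [CommRing A] [CommRing B]
    [Algebra K A] [Algebra K B] [FiniteDimensional K A] [FiniteDimensional K B]
    (gA : A →ₗ[K] A →ₗ[K] K) (hgAs : ∀ x y, gA x y = gA y x)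
    (hgAinv : ∀ x y z : A, gA (x * y) z = gA x (y * z))
    (hgAnd : ∀ x : A, (∀ y : A, gA x y = 0) → x = 0)
    (gB : B →ₗ[K] B →ₗ[K] K) (hgBs : ∀ v w, gB v w = gB w v)
    (hgBinv : ∀ u v w : B, gB (u * v) w = gB u (v * w))
    (α : B →ₗ[K] A) (hαmul : ∀ v w : B, α (v * w) = α v * α w)
    (hαone : α (1 : B) = (1 : A))
    (hnd : ∀ v : B, (∀ w : B, gB v w - gA (α v) (α w) = 0) → v = 0) :
    (∀ p q : A × B, extMul α p q = extMul α q p) ∧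
    (∀ p q r : A × B, extMul α (extMul α p q) r = extMul α p (extMul α q r)) ∧
    (∀ p : A × B, extMul α p (0, 1) = p ∧ extMul α (0, 1) p = p) ∧
    (∀ p q : A × B, extForm gA gB α p q = extForm gA gB α q p) ∧
    (∀ p : A × B, (∀ q : A × B, extForm gA gB α p q = 0) → p = 0) ∧
    (∀ p q r : A × B,
      extForm gA gB α (extMul α p q) r = extForm gA gB α p (extMul α q r)) :=
  stmt5_general gA hgAs hgAinv hgAnd gB hgBs hgBinv α hαmul hαone hnd
end

section
/- Let n, r ≥ 1. Let g = (g_{ij}) be an invertible symmetric real n×n matrix, e ∈ ℝ^n, and set ε_j := Σ_i g_{ij} e_i. Let F_M : ℝ^n → ℝ be a smooth function satisfying the unit condition Σ_i e_i ∂_i∂_j∂_k F_M(t) = g_{jk} for all t ∈ ℝ^n and all 1 ≤ j,k ≤ n. For each t ∈ ℝ^n let ∘_M(t) be the bilinear multiplication on ℝ^n determined by Σ_k g_{kl} (X ∘_M(t) Y)_k = Σ_{i,j} ∂_i∂_j∂_l F_M(t) X_i Y_j. Let ∘_V be a commutative associative bilinear multiplication on ℝ^r with unit e_V, g_V a symmetric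 bilinear form on ℝ^r with g_V(v ∘_V w, u) = g_V(v, w ∘_V u), and λ : ℝ^r → ℝ a linear functional with λ(e_V) = 1 and λ(v ∘_V w) = λ(v)λ(w). With the standard basis (E_s) of ℝ^r, set λ_s := λ(E_s), Λ_{sk} := λ(E_s ∘_V E_k), c_{skj} := g_V(E_s ∘_V E_k, E_j), and define F : ℝ^n × ℝ^r → ℝ by F(t,τ) = F_M(t) + (1/2)(Σ_s λ_s τ_s)(Σ_{i,j} g_{ij} t_i t_j) + (1/2)(Σ_{s,k} Λ_{sk} τ_s τ_k)(Σ_j ε_j t_j) + (1/6) Σ_{s,k,j} c_{skj} τ_s τ_k τ_j. Define the multiplication ∘ on ℝ^n ⊕ ℝ^r (depending on t) by (X,v) ∘ (Y,w) = (X ∘_M(t) Y + λ(w)·X + λ(v)·Y, v ∘_V w), and the symmetric bilinear form G on ℝ^n ⊕ ℝ^r by G((X,v),(Y,w)) = Σ_{i,j} g_{ij} X_i Y_j + λ(v)·Σ_j ε_j Y_j + λ(w)·Σ_i ε_i X_i + g_V(v,w). Then for all (t,τ) and all (X,v), (Y,w), (Z,u) ∈ ℝ^n ⊕ ℝ^r,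 the third derivative of F satisfies D³F(t,τ)((X,v),(Y,w),(Z,u)) = G((X,v) ∘ (Y,w), (Z,u)), i.e. F is a potential for the extended structure (∘, G). -/
/-!
Write `z = (t, τ)`. Then `F(z) = F_M(t) + T(z, z, z)` for an explicit trilinear form `T`, so
`D³F = D³F_M + (symmetrisation of T)`. Using the symmetry of `g` and `g_V`, the commutativity of
`∘_V` and the invariance of `g_V`, the symmetrised `T` collapses to the `λ`- and `g_V`-terms of
`G((X,v) ∘ (Y,w), (Z,u))` (with `λ(v ∘_V u) = λ(v) λ(u)`). The remaining two terms come from `F_M`: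
by definition of `∘_M`, `D³F_M(X, Y, Z) = g(X ∘_M Y, Z)`, and the unit condition together with the
symmetry of `D³F_M` gives `g(e, X ∘_M Y) = g(X, Y)`.
-/

open Equiv Matrix

theorem Finset.sum_perm_fin_three {M : Type*} [AddCommMonoid M] (f : Perm (Fin 3) → M) :
    ∑ σ, f σ = f 1 + f (swap 0 1) + f (swap 1 2) + f (swap 0 2) + f (swap 0 1 * swap 1 2)
      + f (swap 1 2 * swap 0 1) := by
  rw [show (univ : Finset (Perm (Fin 3))) =
    {1, swap 0 1, swap 1 2, swap 0 2, swap 0 1 * swap 1 2, swap 1 2 * swap 0 1} by decide]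
  rw [sum_insert (by decide), sum_insert (by decide), sum_insert (by decide),
    sum_insert (by decide), sum_insert (by decide), sum_singleton]
  abel

section CubicForms

variable {𝕜 E F : Type*} [NontriviallyNormedField 𝕜] [NormedAddCommGroup E] [NormedSpace 𝕜 E]
  [NormedAddCommGroup F] [NormedSpace 𝕜 F]

namespace ContinuousLinearMap

def uncurry₃ (T : E →L[𝕜] E →L[𝕜] E →L[𝕜] F) :
    ContinuousMultilinearMap 𝕜 (fun _ : Fin 3 => E) F where
  toFun m := T (m 0) (m 1) (m 2)
  map_update_add' m i x y := by fin_cases i <;> simp [Fin.ext_iff]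
  map_update_smul' m i c x := by fin_cases i <;> simp [Fin.ext_iff]
  cont := by fun_prop

@[simp] theorem uncurry₃_apply (T : E →L[𝕜] E →L[𝕜] E →L[𝕜] F) (m : Fin 3 → E) :
    uncurry₃ T m = T (m 0) (m 1) (m 2) := rfl

theorem iteratedFDeriv_three_apply_diag (T : E →L[𝕜] E →L[𝕜] E →L[𝕜] F) (x a b c : E) :
    iteratedFDeriv 𝕜 3 (fun z => T z z z) x ![a, b, c]
      = T a b c + T b a c + T a c b + T c b a + T b c a + T c a b := by
  change iteratedFDeriv 𝕜 3 (fun z => uncurry₃ T fun _ => z) x ![a, b, c] = _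
  rw [ContinuousMultilinearMap.iteratedFDeriv_comp_diagonal, Finset.sum_perm_fin_three]
  simp [swap_apply_def]

end ContinuousLinearMap

namespace LinearMap

variable [CompleteSpace 𝕜] [FiniteDimensional 𝕜 E]

noncomputable def toContinuousLinearMap₃ (T : E →ₗ[𝕜] E →ₗ[𝕜] E →ₗ[𝕜] F) :
    E →L[𝕜] E →L[𝕜] E →L[𝕜] F :=
  toContinuousLinearMap (toContinuousLinearMap.toLinearMap ∘ₗ
    T.compr₂ toContinuousLinearMap.toLinearMap)

@[simp] theorem toContinuousLinearMap₃_apply (T : E →ₗ[𝕜] E →ₗ[𝕜] E →ₗ[𝕜] F) (a b c : E) :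
    T.toContinuousLinearMap₃ a b c = T a b c := rfl

theorem contDiff_apply_diag (T : E →ₗ[𝕜] E →ₗ[𝕜] E →ₗ[𝕜] F) {n : WithTop ℕ∞} :
    ContDiff 𝕜 n fun z => T z z z := by
  simpa using (show ContDiff 𝕜 n fun z => T.toContinuousLinearMap₃ z z z by fun_prop)

theorem iteratedFDeriv_three_apply_diag (T : E →ₗ[𝕜] E →ₗ[𝕜] E →ₗ[𝕜] F) (x a b c : E) :
    iteratedFDeriv 𝕜 3 (fun z => T z z z) x ![a, b, c]
      = T a b c + T b a c + T a c b + T c b a + T b c a + T c a b := by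
  simpa using T.toContinuousLinearMap₃.iteratedFDeriv_three_apply_diag x a b c

end LinearMap

end CubicForms

section Symmetry

variable {𝕜 E F : Type*} [RCLike 𝕜] [NormedAddCommGroup E] [NormedSpace 𝕜 E]
  [NormedAddCommGroup F] [NormedSpace 𝕜 F] {f : E → F}

theorem ContDiff.iteratedFDeriv_three_swap_zero_one (hf : ContDiff 𝕜 3 f) (x a b c : E) :
    iteratedFDeriv 𝕜 3 f x ![a, b, c] = iteratedFDeriv 𝕜 3 f x ![b, a, c] := by
  have hsymm : IsSymmSndFDerivAt 𝕜 (fderiv 𝕜 f) x :=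
    (hf.fderiv_right (m := 2) le_rfl).contDiffAt.isSymmSndFDerivAt (by simp)
  have hinit (p q : E) : Fin.init ![p, q, c] = ![p, q] := by ext i; fin_cases i <;> rfl
  rw [iteratedFDeriv_succ_apply_right (n := 2) ![a, b, c],
    iteratedFDeriv_succ_apply_right (n := 2) ![b, a, c], hinit, hinit]
  exact congrArg (· c) hsymm.iteratedFDeriv_cons

theorem ContDiff.iteratedFDeriv_three_swap_one_two (hf : ContDiff 𝕜 3 f) (x a b c : E) :
    iteratedFDeriv 𝕜 3 f x ![a, b, c] = iteratedFDeriv 𝕜 3 f x ![a, c, b] := by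
  have hdiff : Differentiable 𝕜 (iteratedFDeriv 𝕜 2 f) :=
    hf.differentiable_iteratedFDeriv (by norm_num)
  have hsymm (y : E) : iteratedFDeriv 𝕜 2 f y ![b, c] = iteratedFDeriv 𝕜 2 f y ![c, b] :=
    ((hf.contDiffAt (x := y)).isSymmSndFDerivAt (by norm_num)).iteratedFDeriv_cons
  rw [iteratedFDeriv_succ_apply_left, iteratedFDeriv_succ_apply_left,
    ← fderiv_continuousMultilinear_apply_const_apply (hdiff x),
    ← fderiv_continuousMultilinear_apply_const_apply (hdiff x)]
  change fderiv 𝕜 (fun y => iteratedFDeriv 𝕜 2 f y ![b, c]) x a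
    = fderiv 𝕜 (fun y => iteratedFDeriv 𝕜 2 f y ![c, b]) x a
  simp only [hsymm]

theorem ContDiff.iteratedFDeriv_three_cycle (hf : ContDiff 𝕜 3 f) (x a b c : E) :
    iteratedFDeriv 𝕜 3 f x ![a, b, c] = iteratedFDeriv 𝕜 3 f x ![c, a, b] := by
  rw [hf.iteratedFDeriv_three_swap_one_two, hf.iteratedFDeriv_three_swap_zero_one]

end Symmetry

theorem iteratedFDeriv_comp_fst_apply {𝕜 E E' F : Type*} [NontriviallyNormedField 𝕜]
    [NormedAddCommGroup E] [NormedSpace 𝕜 E] [NormedAddCommGroup E'] [NormedSpace 𝕜 E']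
    [NormedAddCommGroup F] [NormedSpace 𝕜 F] {f : E → F} {n : WithTop ℕ∞} {i : ℕ}
    (hf : ContDiff 𝕜 n f) (hi : i ≤ n) (x : E × E') (m : Fin i → E × E') :
    iteratedFDeriv 𝕜 i (fun z => f z.1) x m = iteratedFDeriv 𝕜 i f x.1 (fun j => (m j).1) := by
  rw [show (fun z : E × E' => f z.1) = f ∘ ContinuousLinearMap.fst 𝕜 E E' from rfl,
    ContinuousLinearMap.iteratedFDeriv_comp_right _ hf _ hi]
  rfl

section Coordinates

variable {ι R M : Type*} [Fintype ι] [DecidableEq ι] [CommSemiring R] [AddCommMonoid M]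
  [Module R M]

theorem LinearMap.apply_eq_sum_smul_single (f : (ι → R) →ₗ[R] M) (x : ι → R) :
    f x = ∑ i, x i • f (Pi.single i 1) := by
  conv_lhs => rw [pi_eq_sum_univ' x]
  simp only [map_sum, map_smul]

theorem LinearMap.apply_apply_eq_sum_smul_single {κ : Type*} [Fintype κ] [DecidableEq κ]
    (B : (ι → R) →ₗ[R] (κ → R) →ₗ[R] M) (x : ι → R) (y : κ → R) :
    B x y = ∑ i, ∑ j, x i • y j • B (Pi.single i 1) (Pi.single j 1) := by
  rw [B.apply_eq_sum_smul_single x, LinearMap.sum_apply]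
  simp only [LinearMap.smul_apply, (B _).apply_eq_sum_smul_single y, Finset.smul_sum]

theorem MultilinearMap.apply_eq_sum_smul_update_single {ι' : Type*} [DecidableEq ι']
    (f : MultilinearMap R (fun _ : ι' => ι → R) M) (m : ι' → ι → R) (i : ι') :
    f m = ∑ k, m i k • f (Function.update m i (Pi.single k 1)) := by
  simpa using (f.toLinearMap m i).apply_eq_sum_smul_single (m i)

end Coordinates

namespace MultilinearMap

variable {ι R M : Type*} [Fintype ι] [DecidableEq ι] [CommSemiring R] [AddCommMonoid M]
  [Module R M] (f : MultilinearMap R (fun _ : Fin 3 => ι → R) M) (x y z : ι → R)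

theorem apply_vecCons_eq_sum_zero : f ![x, y, z] = ∑ k, x k • f ![Pi.single k 1, y, z] := by
  rw [f.apply_eq_sum_smul_update_single _ 0]
  congr! with k
  ext i; fin_cases i <;> rfl

theorem apply_vecCons_eq_sum_one : f ![x, y, z] = ∑ k, y k • f ![x, Pi.single k 1, z] := by
  rw [f.apply_eq_sum_smul_update_single _ 1]
  congr! with k
  ext i; fin_cases i <;> rfl

theorem apply_vecCons_eq_sum_two : f ![x, y, z] = ∑ k, z k • f ![x, y, Pi.single k 1] := by
  rw [f.apply_eq_sum_smul_update_single _ 2]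
  congr! with k
  ext i; fin_cases i <;> rfl

theorem apply_vecCons_eq_sum_zero_one :
    f ![x, y, z] = ∑ i, ∑ j, x i • y j • f ![Pi.single i 1, Pi.single j 1, z] := by
  rw [f.apply_vecCons_eq_sum_zero]
  simp only [f.apply_vecCons_eq_sum_one _ y, Finset.smul_sum]

end MultilinearMap

section BilinearForm

variable {ι R : Type*} [Fintype ι] [CommSemiring R]

theorem sum_sum_mul_mul_eq_dotProduct_mulVec (g : Matrix ι ι R) (x y : ι → R) :
    ∑ i, ∑ j, g i j * x i * y j = x ⬝ᵥ g *ᵥ y := by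
  simp only [dotProduct, mulVec, Finset.mul_sum]
  exact Finset.sum_congr rfl fun _ _ => Finset.sum_congr rfl fun _ _ => by ring

theorem sum_sum_mul_mul_eq_dotProduct_mulVec' (g : Matrix ι ι R) (x y : ι → R) :
    ∑ j, (∑ i, g i j * x i) * y j = x ⬝ᵥ g *ᵥ y := by
  rw [← sum_sum_mul_mul_eq_dotProduct_mulVec, Finset.sum_comm]
  simp only [Finset.sum_mul]

theorem dotProduct_mulVec_comm {g : Matrix ι ι R} (hg : ∀ i j, g i j = g j i) (x y : ι → R) :
    x ⬝ᵥ g *ᵥ y = y ⬝ᵥ g *ᵥ x := by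
  rw [← sum_sum_mul_mul_eq_dotProduct_mulVec, ← sum_sum_mul_mul_eq_dotProduct_mulVec,
    Finset.sum_comm]
  exact Finset.sum_congr rfl fun _ _ => Finset.sum_congr rfl fun _ _ => by rw [hg]; ring

end BilinearForm

section StructureConstants

variable {ι R : Type*} [Fintype ι] [DecidableEq ι] [CommSemiring R]
  {D : MultilinearMap R (fun _ : Fin 3 => ι → R) R} {g : Matrix ι ι R}
  {circ : (ι → R) → (ι → R) → ι → R}

theorem circ_dotProduct_mulVec
    (hcirc : ∀ X Y l, ∑ k, g k l * circ X Y k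
      = ∑ i, ∑ j, D ![Pi.single i 1, Pi.single j 1, Pi.single l 1] * X i * Y j)
    (X Y Z : ι → R) : circ X Y ⬝ᵥ g *ᵥ Z = D ![X, Y, Z] := by
  rw [← sum_sum_mul_mul_eq_dotProduct_mulVec', D.apply_vecCons_eq_sum_two]
  refine Finset.sum_congr rfl fun l _ => ?_
  rw [hcirc, D.apply_vecCons_eq_sum_zero_one, smul_eq_mul, mul_comm]
  simp only [smul_eq_mul]
  congr 1
  exact Finset.sum_congr rfl fun _ _ => Finset.sum_congr rfl fun _ _ => by ring

theorem unit_dotProduct_mulVec_circ {e : ι → R} (hg : ∀ i j, g i j = g j i)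
    (hcirc : ∀ X Y l, ∑ k, g k l * circ X Y k
      = ∑ i, ∑ j, D ![Pi.single i 1, Pi.single j 1, Pi.single l 1] * X i * Y j)
    (hunit : ∀ j k, ∑ i, e i * D ![Pi.single i 1, Pi.single j 1, Pi.single k 1] = g j k)
    (hcycle : ∀ a b c, D ![a, b, c] = D ![c, a, b]) (X Y : ι → R) :
    e ⬝ᵥ g *ᵥ circ X Y = X ⬝ᵥ g *ᵥ Y := by
  have hunit' (j k : ι) : D ![e, Pi.single j 1, Pi.single k 1] = g j k := by
    rw [D.apply_vecCons_eq_sum_zero, ← hunit]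
    simp only [smul_eq_mul]
  rw [dotProduct_mulVec_comm hg, circ_dotProduct_mulVec hcirc, hcycle,
    D.apply_vecCons_eq_sum_one, ← sum_sum_mul_mul_eq_dotProduct_mulVec]
  refine Finset.sum_congr rfl fun i _ => ?_
  rw [D.apply_vecCons_eq_sum_two]
  simp only [hunit', smul_eq_mul, Finset.mul_sum]
  exact Finset.sum_congr rfl fun _ _ => by ring

end StructureConstants

section Extension

open LinearMap

variable {n r : ℕ} (g : Matrix (Fin n) (Fin n) ℝ) (e : Fin n → ℝ)
  (circV : (Fin r → ℝ) →ₗ[ℝ] (Fin r → ℝ) →ₗ[ℝ] (Fin r → ℝ))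
  (gV : (Fin r → ℝ) →ₗ[ℝ] (Fin r → ℝ) →ₗ[ℝ] ℝ) (lam : (Fin r → ℝ) →ₗ[ℝ] ℝ)

-- Not symmetric; only its diagonal `T z z z` (the polynomial part of `F`) matters.
noncomputable def cubicPotential :
    ((Fin n → ℝ) × (Fin r → ℝ)) →ₗ[ℝ] ((Fin n → ℝ) × (Fin r → ℝ)) →ₗ[ℝ]
      ((Fin n → ℝ) × (Fin r → ℝ)) →ₗ[ℝ] ℝ :=
  (1 / 2 : ℝ) • (lam ∘ₗ snd ℝ _ _).smulRight ((toLinearMap₂' ℝ g).compl₁₂ (fst ℝ _ _) (fst ℝ _ _))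
  + (1 / 2 : ℝ) • ((circV.compr₂ lam).compl₁₂ (snd ℝ _ _) (snd ℝ _ _)).compr₂
      (toSpanSingleton ℝ _ (toLinearMap₂' ℝ g e ∘ₗ fst ℝ _ _))
  + (1 / 6 : ℝ) • ((circV.compr₂ gV).compl₁₂ (snd ℝ _ _) (snd ℝ _ _)).compr₂
      (lcomp ℝ ℝ (snd ℝ _ _))

theorem cubicPotential_apply (a b c : (Fin n → ℝ) × (Fin r → ℝ)) :
    cubicPotential g e circV gV lam a b c
      = 1 / 2 * lam a.2 * (b.1 ⬝ᵥ g *ᵥ c.1) + 1 / 2 * lam (circV a.2 b.2) * (e ⬝ᵥ g *ᵥ c.1)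
        + 1 / 6 * gV (circV a.2 b.2) c.2 := by
  simp only [cubicPotential, LinearMap.add_apply, LinearMap.smul_apply, coe_smulRight, coe_comp,
    coe_fst, coe_snd, Function.comp_apply, compr₂_apply, compl₁₂_apply, fst_apply, snd_apply,
    toSpanSingleton_apply, lcomp_apply, toLinearMap₂'_apply', smul_eq_mul]
  ring

theorem iteratedFDeriv_cubicPotential (hg : ∀ i j, g i j = g j i)
    (hVcomm : ∀ v w, circV v w = circV w v) (hgVsymm : ∀ v w, gV v w = gV w v)
    (hgVinv : ∀ u v w, gV (circV u v) w = gV u (circV v w))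
    (x : (Fin n → ℝ) × (Fin r → ℝ)) (X Y Z : Fin n → ℝ) (v w u : Fin r → ℝ) :
    iteratedFDeriv ℝ 3 (fun z => cubicPotential g e circV gV lam z z z) x
        ![(X, v), (Y, w), (Z, u)]
      = lam v * (Y ⬝ᵥ g *ᵥ Z) + lam w * (X ⬝ᵥ g *ᵥ Z) + lam u * (X ⬝ᵥ g *ᵥ Y)
        + lam (circV v w) * (e ⬝ᵥ g *ᵥ Z) + lam (circV v u) * (e ⬝ᵥ g *ᵥ Y)
        + lam (circV w u) * (e ⬝ᵥ g *ᵥ X) + gV (circV v w) u := by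
  have hswap (a b c : Fin r → ℝ) : gV (circV a b) c = gV (circV a c) b := by
    rw [hVcomm, hgVinv, hgVsymm]
  rw [LinearMap.iteratedFDeriv_three_apply_diag]
  simp only [cubicPotential_apply]
  rw [dotProduct_mulVec_comm hg Z Y, dotProduct_mulVec_comm hg Z X, dotProduct_mulVec_comm hg Y X,
    hVcomm u v, hVcomm u w, hswap v u w, hswap w u v, hVcomm w v]
  ring

theorem potential_eq_fst_add_cubicPotential {FM : (Fin n → ℝ) → ℝ}
    {F : (Fin n → ℝ) × (Fin r → ℝ) → ℝ}
    (hF : ∀ (t : Fin n → ℝ) (τ : Fin r → ℝ),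
      F (t, τ) = FM t
        + (1 / 2) * (∑ s, lam (Pi.single s 1) * τ s) * (∑ i, ∑ j, g i j * t i * t j)
        + (1 / 2) * (∑ s, ∑ k, lam (circV (Pi.single s 1) (Pi.single k 1)) * τ s * τ k)
            * (∑ j, (∑ i, g i j * e i) * t j)
        + (1 / 6) * ∑ s, ∑ k, ∑ j,
            gV (circV (Pi.single s 1) (Pi.single k 1)) (Pi.single j 1)
              * τ s * τ k * τ j) :
    F = fun z => FM z.1 + cubicPotential g e circV gV lam z z z := by
  funext ⟨t, τ⟩
  have hlam : ∑ s, lam (Pi.single s 1) * τ s = lam τ := by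
    simp only [lam.apply_eq_sum_smul_single τ, smul_eq_mul, mul_comm]
  have hlamV : ∑ s, ∑ k, lam (circV (Pi.single s 1) (Pi.single k 1)) * τ s * τ k
      = lam (circV τ τ) := by
    rw [← compr₂_apply circV lam, apply_apply_eq_sum_smul_single]
    simp only [compr₂_apply, smul_eq_mul]
    exact Finset.sum_congr rfl fun _ _ => Finset.sum_congr rfl fun _ _ => by ring
  have hgV : ∑ s, ∑ k, ∑ j, gV (circV (Pi.single s 1) (Pi.single k 1)) (Pi.single j 1)
        * τ s * τ k * τ j = gV (circV τ τ) τ := by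
    rw [← flip_apply gV, ← compr₂_apply circV, apply_apply_eq_sum_smul_single]
    simp only [compr₂_apply, flip_apply, (gV _).apply_eq_sum_smul_single τ, smul_eq_mul,
      Finset.mul_sum]
    exact Finset.sum_congr rfl fun _ _ => Finset.sum_congr rfl fun _ _ =>
      Finset.sum_congr rfl fun _ _ => by ring
  rw [hF, hlam, hlamV, hgV, sum_sum_mul_mul_eq_dotProduct_mulVec,
    sum_sum_mul_mul_eq_dotProduct_mulVec', cubicPotential_apply]
  ring

end Extension

theorem stmt8_general (n r : ℕ)
    (g : Matrix (Fin n) (Fin n) ℝ) (hgsymm : ∀ i j, g i j = g j i)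
    (e : Fin n → ℝ)
    (FM : (Fin n → ℝ) → ℝ) (hFM : ContDiff ℝ (⊤ : ℕ∞) FM)
    (hunit : ∀ (t : Fin n → ℝ) (j k : Fin n),
      ∑ i, e i * iteratedFDeriv ℝ 3 FM t
          ![Pi.single i 1, Pi.single j 1, Pi.single k 1] = g j k)
    (circM : (Fin n → ℝ) → (Fin n → ℝ) → (Fin n → ℝ) → Fin n → ℝ)
    (hcircM : ∀ (t X Y : Fin n → ℝ) (l : Fin n),
      ∑ k, g k l * circM t X Y k
        = ∑ i, ∑ j, iteratedFDeriv ℝ 3 FM t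
            ![Pi.single i 1, Pi.single j 1, Pi.single l 1] * X i * Y j)
    (circV : (Fin r → ℝ) →ₗ[ℝ] (Fin r → ℝ) →ₗ[ℝ] (Fin r → ℝ))
    (hVcomm : ∀ v w, circV v w = circV w v)
    (gV : (Fin r → ℝ) →ₗ[ℝ] (Fin r → ℝ) →ₗ[ℝ] ℝ)
    (hgVsymm : ∀ v w, gV v w = gV w v)
    (hgVinv : ∀ u v w, gV (circV u v) w = gV u (circV v w))
    (lam : (Fin r → ℝ) →ₗ[ℝ] ℝ)
    (hlammul : ∀ v w, lam (circV v w) = lam v * lam w)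
    (F : (Fin n → ℝ) × (Fin r → ℝ) → ℝ)
    (hF : ∀ (t : Fin n → ℝ) (τ : Fin r → ℝ),
      F (t, τ) = FM t
        + (1 / 2) * (∑ s, lam (Pi.single s 1) * τ s) * (∑ i, ∑ j, g i j * t i * t j)
        + (1 / 2) * (∑ s, ∑ k, lam (circV (Pi.single s 1) (Pi.single k 1)) * τ s * τ k)
            * (∑ j, (∑ i, g i j * e i) * t j)
        + (1 / 6) * ∑ s, ∑ k, ∑ j,
            gV (circV (Pi.single s 1) (Pi.single k 1)) (Pi.single j 1)
              * τ s * τ k * τ j) :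
    ∀ (t : Fin n → ℝ) (τ : Fin r → ℝ) (X Y Z : Fin n → ℝ) (v w u : Fin r → ℝ),
      iteratedFDeriv ℝ 3 F (t, τ) ![(X, v), (Y, w), (Z, u)]
        = (∑ i, ∑ j, g i j * (circM t X Y + lam w • X + lam v • Y) i * Z j)
          + lam (circV v w) * (∑ j, (∑ i, g i j * e i) * Z j)
          + lam u * (∑ i, (∑ k, g k i * e k) * (circM t X Y + lam w • X + lam v • Y) i)
          + gV (circV v w) u := by
  intro t τ X Y Z v w u
  have hFM3 : ContDiff ℝ 3 FM := hFM.of_le (by norm_cast)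
  have hmul : circM t X Y ⬝ᵥ g *ᵥ Z = iteratedFDeriv ℝ 3 FM t ![X, Y, Z] :=
    circ_dotProduct_mulVec (D := (iteratedFDeriv ℝ 3 FM t).toMultilinearMap) (hcircM t) X Y Z
  have hunit' : e ⬝ᵥ g *ᵥ circM t X Y = X ⬝ᵥ g *ᵥ Y :=
    unit_dotProduct_mulVec_circ (D := (iteratedFDeriv ℝ 3 FM t).toMultilinearMap) hgsymm
      (hcircM t) (hunit t) (hFM3.iteratedFDeriv_three_cycle t) X Y
  have hfst : (fun j => (![(X, v), (Y, w), (Z, u)] j).1) = ![X, Y, Z] := by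
    ext j; fin_cases j <;> rfl
  rw [potential_eq_fst_add_cubicPotential g e circV gV lam hF,
    fun_iteratedFDeriv_add_apply (f := fun z : (Fin n → ℝ) × (Fin r → ℝ) => FM z.1)
      (hFM3.comp contDiff_fst).contDiffAt
      (LinearMap.contDiff_apply_diag _).contDiffAt,
    _root_.add_apply, iteratedFDeriv_comp_fst_apply hFM3 le_rfl, hfst,
    iteratedFDeriv_cubicPotential g e circV gV lam hgsymm hVcomm hgVsymm hgVinv, ← hmul]
  simp only [sum_sum_mul_mul_eq_dotProduct_mulVec, sum_sum_mul_mul_eq_dotProduct_mulVec',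
    add_dotProduct, smul_dotProduct, mulVec_add, mulVec_smul, dotProduct_add, dotProduct_smul,
    smul_eq_mul, hunit', hlammul]
  ring

/-- in flat coordinates, the function
`F(t,τ) = F_M(t) + ½(Σ λ_s τ_s)(Σ g_{ij} t_i t_j) + ½(Σ Λ_{sk} τ_s τ_k)(Σ ε_j t_j)
         + ⅙ Σ c_{skj} τ_s τ_k τ_j`
is a potential for the extended multiplication
`(X,v) ∘ (Y,w) = (X ∘_M Y + λ(w)X + λ(v)Y, v ∘_V w)` and extended metric `G`:
its third derivative in directions `(X,v), (Y,w), (Z,u)` equals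
`G((X,v) ∘ (Y,w), (Z,u))`. -/
theorem stmt8 (n r : ℕ) (hn : 1 ≤ n) (hr : 1 ≤ r)
    (g : Matrix (Fin n) (Fin n) ℝ) (hgsymm : ∀ i j, g i j = g j i)
    (hginv : IsUnit g)
    (e : Fin n → ℝ)
    (FM : (Fin n → ℝ) → ℝ) (hFM : ContDiff ℝ (⊤ : ℕ∞) FM)
    (hunit : ∀ (t : Fin n → ℝ) (j k : Fin n),
      ∑ i, e i * iteratedFDeriv ℝ 3 FM t
          ![Pi.single i 1, Pi.single j 1, Pi.single k 1] = g j k)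
    (circM : (Fin n → ℝ) → (Fin n → ℝ) → (Fin n → ℝ) → Fin n → ℝ)
    (hcircM : ∀ (t X Y : Fin n → ℝ) (l : Fin n),
      ∑ k, g k l * circM t X Y k
        = ∑ i, ∑ j, iteratedFDeriv ℝ 3 FM t
            ![Pi.single i 1, Pi.single j 1, Pi.single l 1] * X i * Y j)
    (circV : (Fin r → ℝ) →ₗ[ℝ] (Fin r → ℝ) →ₗ[ℝ] (Fin r → ℝ))
    (hVcomm : ∀ v w, circV v w = circV w v)
    (hVassoc : ∀ u v w, circV (circV u v) w = circV u (circV v w))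
    (eV : Fin r → ℝ) (hVunit : ∀ v, circV v eV = v)
    (gV : (Fin r → ℝ) →ₗ[ℝ] (Fin r → ℝ) →ₗ[ℝ] ℝ)
    (hgVsymm : ∀ v w, gV v w = gV w v)
    (hgVinv : ∀ u v w, gV (circV u v) w = gV u (circV v w))
    (lam : (Fin r → ℝ) →ₗ[ℝ] ℝ)
    (hlam1 : lam eV = 1)
    (hlammul : ∀ v w, lam (circV v w) = lam v * lam w)
    (F : (Fin n → ℝ) × (Fin r → ℝ) → ℝ)
    (hF : ∀ (t : Fin n → ℝ) (τ : Fin r → ℝ),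
      F (t, τ) = FM t
        + (1 / 2) * (∑ s, lam (Pi.single s 1) * τ s) * (∑ i, ∑ j, g i j * t i * t j)
        + (1 / 2) * (∑ s, ∑ k, lam (circV (Pi.single s 1) (Pi.single k 1)) * τ s * τ k)
            * (∑ j, (∑ i, g i j * e i) * t j)
        + (1 / 6) * ∑ s, ∑ k, ∑ j,
            gV (circV (Pi.single s 1) (Pi.single k 1)) (Pi.single j 1)
              * τ s * τ k * τ j) :
    ∀ (t : Fin n → ℝ) (τ : Fin r → ℝ) (X Y Z : Fin n → ℝ) (v w u : Fin r → ℝ),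
      iteratedFDeriv ℝ 3 F (t, τ) ![(X, v), (Y, w), (Z, u)]
        = (∑ i, ∑ j, g i j * (circM t X Y + lam w • X + lam v • Y) i * Z j)
          + lam (circV v w) * (∑ j, (∑ i, g i j * e i) * Z j)
          + lam u * (∑ i, (∑ k, g k i * e k) * (circM t X Y + lam w • X + lam v • Y) i)
          + gV (circV v w) u :=
  stmt8_general n r g hgsymm e FM hFM hunit circM hcircM circV hVcomm gV hgVsymm hgVinv lam hlammul
    F hF
end

section
/- Let V be a complex vector space equipped with a commutative associative ℂ-bilinear multiplication ∘ with unit element e ≠ 0. Let k : V → V be a conjugate-linear map with k ∘ k = id, and let μ ∈ ℂ with k(e) = μ·e. For Z ∈ V define φ_Z : V → V by φ_Z(Y) = −Z ∘ Y. Assume that for all Z₁, Z₂ ∈ V the commutator [φ_{Z₁}, k∘φ_{Z₂}∘k] annihilates e, i.e. φ_{Z₁}(k(φ_{Z₂}(k(e)))) = k(φ_{Z₂}(k(φ_{Z₁}(e)))). Then: (1) |μ| = 1; (2) k(Z₁ ∘ Z₂) = conj(μ)·k(Z₁) ∘ k(Z₂) for all Z₁, Z₂ ∈ V; (3) k ∘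 φ_Z ∘ k = conj(μ)·φ_{k(Z)} for all Z ∈ V; (4) [φ_{Z₁}, k∘φ_{Z₂}∘k] = 0 on all of V, for all Z₁, Z₂ ∈ V. -/
/-!
Since `k e = μ e` and `e` is a unit, the hypothesis evaluated on `e` says that `k` is
multiplicative up to the factor `conj μ`: `conj μ • Z₁ ∘ k Z₂ = k (Z₂ ∘ k Z₁)`. Taking
`Z₁ = Z₂ = e` gives `|μ|² = 1`. Hence `k ∘ φ_Z ∘ k = conj μ • φ_{k Z}` is again a
multiplication operator, and multiplication operators commute in a commutative associative
algebra.
-/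

open ComplexConjugate

namespace Complex

theorem norm_eq_one_of_conj_mul_self_smul {V : Type*} [AddCommGroup V] [Module ℂ V]
    {μ : ℂ} {e : V} (he : e ≠ 0) (h : (conj μ * μ) • e = e) : ‖μ‖ = 1 := by
  have hμ : conj μ * μ = 1 := smul_left_injective ℂ he (h.trans (one_smul ℂ e).symm)
  have hsq : (‖μ‖ : ℂ) ^ 2 = 1 := by rw [← mul_conj', mul_comm, hμ]
  exact (pow_eq_one_iff_of_nonneg (norm_nonneg μ) two_ne_zero).mp (by exact_mod_cast hsq)

end Complex

section TwistedMultiplicative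

variable {V : Type*} [AddCommGroup V] [Module ℂ V] (circ : V →ₗ[ℂ] V →ₗ[ℂ] V)
  {k : V →ₛₗ[starRingEnd ℂ] V} {e : V} {μ : ℂ}

theorem conj_smul_circ_map_eq_map_circ_map (hunit : ∀ x, circ x e = x)
    (hke : k e = μ • e)
    (hcome : ∀ Z₁ Z₂ : V, -circ Z₁ (k (-circ Z₂ (k e))) = k (-circ Z₂ (k (-circ Z₁ e))))
    (Z₁ Z₂ : V) : conj μ • circ Z₁ (k Z₂) = k (circ Z₂ (k Z₁)) := by
  simpa [hke, hunit] using hcome Z₁ Z₂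

variable {circ}

theorem map_circ_eq_conj_smul_circ (hcomm : ∀ x y, circ x y = circ y x)
    (hk : ∀ v, k (k v) = v)
    (htwist : ∀ Z₁ Z₂ : V, conj μ • circ Z₁ (k Z₂) = k (circ Z₂ (k Z₁))) (Z₁ Z₂ : V) :
    k (circ Z₁ Z₂) = conj μ • circ (k Z₁) (k Z₂) := by
  rw [htwist, hk, hcomm]

theorem conj_higgs_eq_conj_smul_higgs
    (hmul : ∀ Z₁ Z₂ : V, k (circ Z₁ Z₂) = conj μ • circ (k Z₁) (k Z₂))
    (hk : ∀ v, k (k v) = v) (Z Y : V) :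
    k (-circ Z (k Y)) = conj μ • -circ (k Z) Y := by
  rw [map_neg, hmul, hk, smul_neg]

theorem higgs_commute_conj_higgs (hcomm : ∀ x y, circ x y = circ y x)
    (hassoc : ∀ x y z, circ (circ x y) z = circ x (circ y z))
    (hconj : ∀ Z Y : V, k (-circ Z (k Y)) = conj μ • -circ (k Z) Y) (Z₁ Z₂ Y : V) :
    -circ Z₁ (k (-circ Z₂ (k Y))) = k (-circ Z₂ (k (-circ Z₁ Y))) := by
  rw [hconj, hconj]
  simp only [smul_neg, map_neg, map_smul, neg_neg]
  rw [← hassoc, hcomm Z₁, hassoc]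

end TwistedMultiplicative

/-- let `(V, ∘, e)` be a commutative associative unital ℂ-algebra with
`e ≠ 0`, `k` a conjugate-linear involution with `k(e) = μ·e`, and suppose the
commutator `[φ_{Z₁}, k ∘ φ_{Z₂} ∘ k]` (with `φ_Z(Y) = −Z ∘ Y`) annihilates `e` for all
`Z₁, Z₂`. Then `|μ| = 1`, `k(Z₁ ∘ Z₂) = conj(μ)·k(Z₁) ∘ k(Z₂)`,
`k ∘ φ_Z ∘ k = conj(μ)·φ_{k(Z)}`, and `[φ_{Z₁}, k ∘ φ_{Z₂} ∘ k] = 0` on all of `V`. -/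
theorem stmt10 {V : Type*} [AddCommGroup V] [Module ℂ V]
    (circ : V →ₗ[ℂ] V →ₗ[ℂ] V)
    (hcomm : ∀ x y, circ x y = circ y x)
    (hassoc : ∀ x y z, circ (circ x y) z = circ x (circ y z))
    (e : V) (he : e ≠ 0) (hunit : ∀ x, circ e x = x)
    (k : V →ₛₗ[starRingEnd ℂ] V) (hk : ∀ v, k (k v) = v)
    (μ : ℂ) (hke : k e = μ • e)
    (hcome : ∀ Z₁ Z₂ : V,
      -circ Z₁ (k (-circ Z₂ (k e))) = k (-circ Z₂ (k (-circ Z₁ e)))) :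
    ‖μ‖ = 1 ∧
    (∀ Z₁ Z₂ : V, k (circ Z₁ Z₂) = (starRingEnd ℂ) μ • circ (k Z₁) (k Z₂)) ∧
    (∀ Z Y : V, k (-circ Z (k Y)) = (starRingEnd ℂ) μ • -circ (k Z) Y) ∧
    (∀ Z₁ Z₂ Y : V,
      -circ Z₁ (k (-circ Z₂ (k Y))) = k (-circ Z₂ (k (-circ Z₁ Y)))) := by
  have htwist := conj_smul_circ_map_eq_map_circ_map circ
    (fun x => (hcomm x e).trans (hunit x)) hke hcome
  have hmul := map_circ_eq_conj_smul_circ hcomm hk htwist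
  have hconj := conj_higgs_eq_conj_smul_higgs hmul hk
  have hnorm : ‖μ‖ = 1 := by
    have h := htwist e e
    rw [hunit, hk, hke, smul_smul] at h
    exact Complex.norm_eq_one_of_conj_mul_self_smul he h
  exact ⟨hnorm, hmul, hconj, higgs_commute_conj_higgs hcomm hassoc hconj⟩
end
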